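/- For any category C, the target functor t : Tw(C)^op → C^op sending an arrow to its target is homotopy terminal: for every object j of C^op, the comma category (j ↓ t) has contractible nerve. -/

import Mathlib

/-!
STATEMENT 1: For any category `C`, the target functor `t : Tw(C)ᵒᵖ ⥤ Cᵒᵖ`
sending an arrow to its target is homotopy terminal: for every object `j` of
`Cᵒᵖ`, the comma category `(j ↓ t)` has contractible nerve.
-/

open CategoryTheory Simplicial CategoryTheory.Limits

universe v u

/-- The opposite of the twisted arrow category of `C`: objects are arrows of
`C`; a morphism from `(a → b)` to `(c → d)` is a pair `u : a → c`, `v : d → b`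
with `u ≫ (c → d) ≫ v = (a → b)`. -/
structure TwOp (C : Type u) [Category.{v} C] : Type max u v where
  left : C
  right : C
  hom : left ⟶ right

instance (C : Type u) [Category.{v} C] : Category (TwOp C) where
  Hom A B := { p : (A.left ⟶ B.left) × (B.right ⟶ A.right) //
    p.1 ≫ B.hom ≫ p.2 = A.hom }
  id A := ⟨(𝟙 _, 𝟙 _), by simp⟩
  comp f g := ⟨(f.val.1 ≫ g.val.1, g.val.2 ≫ f.val.2), by
    dsimp only
    slice_lhs 2 4 => rw [g.property]
    simpa using f.property⟩
  id_comp f := by apply Subtype.ext; simp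
  comp_id f := by apply Subtype.ext; simp
  assoc f g h := by apply Subtype.ext; simp

/-- The target functor `Tw(C)ᵒᵖ ⥤ Cᵒᵖ`, remembering the target of an arrow. -/
def TwOp.tgt (C : Type u) [Category.{v} C] : TwOp C ⥤ Cᵒᵖ where
  obj A := Opposite.op A.right
  map f := f.val.2.op

/-- The map of simplicial sets `X ⟶ Δ[1]` constant at the vertex `k`. -/
def vertexMap (X : SSet) (k : Fin 2) : X ⟶ Δ[1] where
  app m := TypeCat.ofHom fun _ => SSet.stdSimplex.const 1 k m

universe u_1

/-- An elementary simplicial homotopy between two maps of simplicial sets. -/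
def ElemHomotopy {X Y : SSet.{u_1}} (f g : X ⟶ Y) : Prop :=
  ∃ H : Limits.prod X Δ[1] ⟶ Y,
    Limits.prod.lift (𝟙 X) (vertexMap X 0) ≫ H = f ∧
    Limits.prod.lift (𝟙 X) (vertexMap X 1) ≫ H = g

/-- Simplicial homotopy: the equivalence relation generated by elementary
homotopies. -/
def SHomotopic {X Y : SSet} (f g : X ⟶ Y) : Prop :=
  Relation.EqvGen ElemHomotopy f g

/-- A simplicial set is contractible if it is simplicially homotopy equivalent
to the point `Δ[0]`. -/
def SSetContractible (S : SSet) : Prop :=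
  ∃ (p : S ⟶ Δ[0]) (s : Δ[0] ⟶ S),
    SHomotopic (p ≫ s) (𝟙 S) ∧ SHomotopic (s ≫ p) (𝟙 Δ[0])

/-!
Let `x = j.unop`, so that an object of `(j ↓ t)` is a composable pair `a → b → x`. Composing
gives an endofunctor `K` sending `a → b → x` to `a → x → x` (second arrow the identity), and
there are natural transformations `K ⟶ 𝟭` and `K ⟶ const (x → x → x)`. A natural
transformation `F ⟶ G` yields a simplicial homotopy between the nerves of `F` and `G`, so the
identity of the nerve is homotopic to a constant map.
-/

namespace SSet

lemma Homotopy.elemHomotopy {X Y : SSet.{u_1}} {f g : X ⟶ Y} (H : Homotopy f g) :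
    ElemHomotopy f g := by
  refine ⟨CartesianMonoidalCategory.lift prod.fst prod.snd ≫ H.h, ?_, ?_⟩
  -- `vertexMap X k` is definitionally `const` at the vertex `k`, which makes these `ι₀` and `ι₁`.
  · rw [← Category.assoc, CartesianMonoidalCategory.comp_lift, prod.lift_fst, prod.lift_snd]
    exact H.h₀
  · rw [← Category.assoc, CartesianMonoidalCategory.comp_lift, prod.lift_fst, prod.lift_snd]
    exact H.h₁

end SSet

namespace CategoryTheory.NatTrans

variable {D E : Type u} [Category.{v} D] [Category.{v} E] {F G : D ⥤ E}

/-- Applies `F` where `φ` is `0` and `G` where `φ` is `1`, joined by `α`. -/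
def cylinder (α : F ⟶ G) {I : Type*} [Category I] (φ : I ⥤ Fin 2) (σ : I ⥤ D) : I ⥤ E :=
  φ.prod' σ ⋙ Functor.uncurry.obj (ComposableArrows.mk₁ α)

variable {I : Type*} [Category I]

lemma cylinder_const_zero (α : F ⟶ G) (σ : I ⥤ D) :
    cylinder α ((Functor.const I).obj 0) σ = σ ⋙ F :=
  Functor.ext (fun _ => rfl) fun _ _ _ => by
    simp [cylinder, ComposableArrows.mk₁]
    exact (Category.id_comp _).symm

lemma cylinder_const_one (α : F ⟶ G) (σ : I ⥤ D) :
    cylinder α ((Functor.const I).obj 1) σ = σ ⋙ G :=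
  Functor.ext (fun _ => rfl) fun _ _ _ => by
    simp [cylinder, ComposableArrows.mk₁]
    exact (Category.id_comp _).symm

def nerveHomotopy (α : F ⟶ G) : SSet.Homotopy (nerveMap F) (nerveMap G) where
  h.app _ := TypeCat.ofHom fun p => cylinder α p.2.down.toOrderHom.monotone.functor p.1
  h.naturality _ _ _ := rfl
  h₀ := by
    ext _ σ : 4
    exact cylinder_const_zero α σ
  h₁ := by
    ext _ σ : 4
    exact cylinder_const_one α σ
  rel := by
    ext _ ⟨⟨_, h⟩, _⟩
    simp at h

end CategoryTheory.NatTrans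

lemma SHomotopic.of_natTrans {D E : Type u} [Category.{v} D] [Category.{v} E] {F G : D ⥤ E}
    (α : F ⟶ G) : SHomotopic (nerveMap F) (nerveMap G) :=
  .rel _ _ (NatTrans.nerveHomotopy α).elemHomotopy

lemma SSetContractible.of_sHomotopic_const {S : SSet} (s : Δ[0] ⟶ S)
    (h : SHomotopic (SSet.stdSimplex.isTerminalObj₀.from S ≫ s) (𝟙 S)) : SSetContractible S :=
  ⟨_, s, h, by rw [SSet.stdSimplex.ext₀ (f := s ≫ _) (g := 𝟙 _)]; exact .refl _⟩

lemma SSetContractible.nerve_of_natTrans {D : Type u} [Category.{v} D] {K : D ⥤ D} {z : D}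
    (α : K ⟶ 𝟭 D) (β : K ⟶ (Functor.const D).obj z) : SSetContractible (nerve D) := by
  refine .of_sHomotopic_const (SSet.const (ComposableArrows.mk₀ z)) ?_
  change SHomotopic (nerveMap ((Functor.const D).obj z)) (nerveMap (𝟭 D))
  exact (Relation.EqvGen.symm _ _ (SHomotopic.of_natTrans β)).trans _ _ _ (SHomotopic.of_natTrans α)

namespace TwOp
variable {C : Type u} [Category.{v} C]

def homMk {A B : TwOp C} (u : A.left ⟶ B.left) (v : B.right ⟶ A.right)
    (w : u ≫ B.hom ≫ v = A.hom) : A ⟶ B :=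
  ⟨(u, v), w⟩

@[ext]
lemma hom_ext {A B : TwOp C} {f g : A ⟶ B} (h₁ : f.val.1 = g.val.1) (h₂ : f.val.2 = g.val.2) :
    f = g :=
  Subtype.ext (Prod.ext h₁ h₂)

variable (j : Cᵒᵖ)

def composite (A : StructuredArrow j (tgt C)) : A.right.left ⟶ j.unop :=
  A.right.hom ≫ A.hom.unop

def structuredArrowOfHom {a : C} (f : a ⟶ j.unop) : StructuredArrow j (tgt C) :=
  StructuredArrow.mk (Y := ({ left := a, right := j.unop, hom := f } : TwOp C)) (𝟙 j)

variable {j}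

lemma snd_comp_hom_unop {A B : StructuredArrow j (tgt C)} (m : A ⟶ B) :
    m.right.val.2 ≫ A.hom.unop = B.hom.unop :=
  congrArg Quiver.Hom.unop (StructuredArrow.w m)

lemma fst_comp_composite {A B : StructuredArrow j (tgt C)} (m : A ⟶ B) :
    m.right.val.1 ≫ composite j B = composite j A := by
  rw [composite, composite, ← snd_comp_hom_unop m]
  exact (reassoc_of% m.right.property) A.hom.unop

variable (j)

def contraction : StructuredArrow j (tgt C) ⥤ StructuredArrow j (tgt C) where
  obj A := structuredArrowOfHom j (composite j A)
  map {A B} m := StructuredArrow.homMk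
    (homMk m.right.val.1 (𝟙 _) <| by
      change m.right.val.1 ≫ composite j B ≫ 𝟙 j.unop = composite j A
      rw [Category.comp_id, fst_comp_composite])
    (Category.id_comp _)
  map_id _ := rfl
  map_comp _ _ := by
    ext
    · rfl
    · exact (Category.id_comp _).symm

def contractionToId : contraction j ⟶ 𝟭 _ where
  app A := StructuredArrow.homMk (homMk (𝟙 _) A.hom.unop (Category.id_comp _)) (Category.id_comp _)
  naturality _ _ m := by
    ext
    · exact (Category.comp_id _).trans (Category.id_comp _).symm
    · exact (Category.comp_id _).trans (snd_comp_hom_unop m).symm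

def contractionToConst :
    contraction j ⟶ (Functor.const _).obj (structuredArrowOfHom j (𝟙 j.unop)) where
  app A := StructuredArrow.homMk
    (homMk (composite j A) (𝟙 _) <| by
      change composite j A ≫ 𝟙 j.unop ≫ 𝟙 j.unop = composite j A
      rw [Category.comp_id, Category.comp_id])
    (Category.id_comp _)
  naturality _ _ m := by
    ext
    · exact (fst_comp_composite m).trans (Category.comp_id _).symm
    · rfl

end TwOp

/-- The target functor is homotopy terminal: every comma category `(j ↓ t)`
has contractible nerve. -/
theorem target_functor_homotopy_terminal (C : Type u) [Category.{v} C]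
    (j : Cᵒᵖ) :
    SSetContractible (nerve (StructuredArrow j (TwOp.tgt C))) :=
  .nerve_of_natTrans (TwOp.contractionToId j) (TwOp.contractionToConst j)
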